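/- For every Cesàro–Banach limit ξ on C_b([0,∞)) there exists a Cesàro–Banach limit ξ' on ℓ∞, and conversely for every Cesàro–Banach limit ξ' on ℓ∞ there exists a Cesàro–Banach limit ξ on C_b([0,∞)), such that ξ(f_g) = ξ'((f_g(k))_{k≥0}) for every nonnegative, nonincreasing, locally integrable g : [1,∞) → ℝ with sup_{t≥1} (1/log(1+t)) ∫_1^t g(s) ds < ∞, where f_g(t) = (1/log(1+e^t)) ∫_1^{e^t} g(s) ds. -/

import Mathlib

open Filter
open scoped ENNReal Topology

/-- `C_b([0,∞))`: the bounded continuous real-valued functions on `[0,∞)`. -/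
noncomputable abbrev Cb : Type := BoundedContinuousFunction (Set.Ici (0 : ℝ)) ℝ

/-- The extension of `f ∈ C_b([0,∞))` to `ℝ` (constant to the left of `0`),
used to integrate `f`. -/
noncomputable def extCb (f : Cb) (s : ℝ) : ℝ := f ⟨max s 0, le_max_right s 0⟩

/-- `F` is the Cesàro transform of `f` on `C_b([0,∞))`:
`F(t) = (1/t) ∫_0^t f(s) ds` for `t > 0` and `F(0) = f(0)`. -/
def IsCesaroOfCb (F f : Cb) : Prop :=
  F ⟨0, Set.self_mem_Ici⟩ = f ⟨0, Set.self_mem_Ici⟩ ∧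
    ∀ t : Set.Ici (0 : ℝ), 0 < t.1 → F t = (1 / t.1) * ∫ s in (0 : ℝ)..t.1, extCb f s

/-- A singular state on `C_b([0,∞))`: a positive linear functional with `γ 1 = 1`
vanishing on every compactly supported function. -/
def IsSingularStateCb (γ : Cb →ₗ[ℝ] ℝ) : Prop :=
  (∀ f : Cb, (∀ t, 0 ≤ f t) → 0 ≤ γ f) ∧ γ 1 = 1 ∧
    ∀ f : Cb, (∃ M : ℝ, ∀ t : Set.Ici (0 : ℝ), M ≤ t.1 → f t = 0) → γ f = 0

/-- A Cesàro–Banach limit on `C_b([0,∞))`: a functional of the form `γ ∘ C` with `γ`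
a singular state on `C_b([0,∞))` and `C` the Cesàro operator. -/
def IsCesaroBanachLimitCb (ξ : Cb →ₗ[ℝ] ℝ) : Prop :=
  ∃ γ : Cb →ₗ[ℝ] ℝ, IsSingularStateCb γ ∧
    ∀ f F : Cb, IsCesaroOfCb F f → ξ f = γ F

/-- The Cesàro operator `C(a)_n = (1/(n+1)) ∑_{k=0}^n a_k` on `ℓ∞`. -/
noncomputable def cesaroLp (a : lp (fun _ : ℕ => ℝ) ∞) : lp (fun _ : ℕ => ℝ) ∞ :=
  ⟨fun n => (1 / ((n : ℝ) + 1)) * ∑ k ∈ Finset.range (n + 1), a k,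
   memℓp_infty ⟨‖a‖, by
    rintro r ⟨n, rfl⟩
    have h2 : ‖∑ k ∈ Finset.range (n + 1), a k‖ ≤ ((n : ℝ) + 1) * ‖a‖ := by
      calc ‖∑ k ∈ Finset.range (n + 1), a k‖ ≤ ∑ k ∈ Finset.range (n + 1), ‖a k‖ :=
            norm_sum_le _ _
        _ ≤ ∑ _k ∈ Finset.range (n + 1), ‖a‖ :=
            Finset.sum_le_sum fun k _ => lp.norm_apply_le_norm ENNReal.top_ne_zero a k
        _ = ((n : ℝ) + 1) * ‖a‖ := by
            rw [Finset.sum_const, Finset.card_range, nsmul_eq_mul]; push_cast; ring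
    calc ‖(1 / ((n : ℝ) + 1)) * ∑ k ∈ Finset.range (n + 1), a k‖
        = (1 / ((n : ℝ) + 1)) * ‖∑ k ∈ Finset.range (n + 1), a k‖ := by
          rw [norm_mul, Real.norm_eq_abs (1 / _), abs_of_nonneg (by positivity)]
      _ ≤ (1 / ((n : ℝ) + 1)) * (((n : ℝ) + 1) * ‖a‖) := by
          have hpos : (0 : ℝ) ≤ 1 / ((n : ℝ) + 1) := by positivity
          exact mul_le_mul_of_nonneg_left h2 hpos
      _ = ‖a‖ := by
          rw [← mul_assoc, one_div, inv_mul_cancel₀ (by positivity : ((n : ℝ) + 1) ≠ 0), one_mul]⟩⟩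

/-- A singular state on `ℓ∞`: a positive linear functional with `σ 1 = 1` vanishing on
every finitely supported sequence. -/
def IsSingularStateLp (σ : lp (fun _ : ℕ => ℝ) ∞ →ₗ[ℝ] ℝ) : Prop :=
  (∀ v : lp (fun _ : ℕ => ℝ) ∞, (∀ n, 0 ≤ v n) → 0 ≤ σ v) ∧ σ 1 = 1 ∧
    ∀ v : lp (fun _ : ℕ => ℝ) ∞, {n : ℕ | v n ≠ 0}.Finite → σ v = 0

/-- A Cesàro–Banach limit on `ℓ∞`: a functional of the form `σ ∘ C` with `σ` a singular
state on `ℓ∞` and `C` the Cesàro operator. -/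
def IsCesaroBanachLimitLp (ω : lp (fun _ : ℕ => ℝ) ∞ →ₗ[ℝ] ℝ) : Prop :=
  ∃ σ : lp (fun _ : ℕ => ℝ) ∞ →ₗ[ℝ] ℝ, IsSingularStateLp σ ∧
    ∀ a : lp (fun _ : ℕ => ℝ) ∞, ω a = σ (cesaroLp a)

/-- The transfer property: `ξ(f_g) = ξ'((f_g(k))_k)` for every nonnegative,
nonincreasing, locally integrable `g : [1,∞) → ℝ` with bounded logarithmic averages,
where `f_g(t) = (1/log(1+e^t)) ∫_1^{e^t} g`. -/
def TransfersTo (ξ : Cb →ₗ[ℝ] ℝ) (ξ' : lp (fun _ : ℕ => ℝ) ∞ →ₗ[ℝ] ℝ) : Prop :=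
  ∀ g : ℝ → ℝ,
    (∀ s : ℝ, 1 ≤ s → 0 ≤ g s) →
    AntitoneOn g (Set.Ici (1 : ℝ)) →
    (∀ t : ℝ, 1 ≤ t → IntervalIntegrable g MeasureTheory.volume 1 t) →
    (∃ B : ℝ, ∀ t : ℝ, 1 ≤ t →
      (1 / Real.log (1 + t)) * ∫ s in (1 : ℝ)..t, g s ≤ B) →
    ∀ fg : ℝ → ℝ,
      (∀ t : ℝ, fg t =
        (1 / Real.log (1 + Real.exp t)) * ∫ s in (1 : ℝ)..(Real.exp t), g s) →
      ∀ F : Cb, (∀ t : Set.Ici (0 : ℝ), F t = fg t.1) →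
      ∀ x : lp (fun _ : ℕ => ℝ) ∞, (∀ k : ℕ, x k = fg k) →
        ξ F = ξ' x


open MeasureTheory intervalIntegral

section Stage1
open MeasureTheory intervalIntegral

lemma extCb_continuous (f : Cb) : Continuous (extCb f) :=
  f.continuous.comp (Continuous.subtype_mk (continuous_id.max continuous_const) _)

lemma extCb_norm_le (f : Cb) (s : ℝ) : ‖extCb f s‖ ≤ ‖f‖ := f.norm_coe_le_norm _

lemma extCb_intervalIntegrable (f : Cb) (a b : ℝ) : IntervalIntegrable (extCb f) volume a b :=
  (extCb_continuous f).intervalIntegrable a b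

lemma extCb_apply_of_nonneg (f : Cb) {s : ℝ} (hs : 0 ≤ s) : extCb f s = f ⟨s, hs⟩ := by
  simp [extCb, max_eq_left hs]

noncomputable def cesaroFun (f : Cb) : ℝ → ℝ :=
  fun t => if t = 0 then f ⟨0, Set.self_mem_Ici⟩ else (1/t) * ∫ s in (0:ℝ)..t, extCb f s

lemma cesaroFun_continuous (f : Cb) : Continuous (cesaroFun f) := by
  rw [continuous_iff_continuousAt]
  intro t
  by_cases ht : t = (0:ℝ)
  · subst ht
    have hd : HasDerivAt (fun u => ∫ s in (0:ℝ)..u, extCb f s) (extCb f 0) 0 :=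
      integral_hasDerivAt_right (extCb_intervalIntegrable f 0 0)
        ((extCb_continuous f).stronglyMeasurableAtFilter volume (𝓝 0))
        (extCb_continuous f).continuousAt
    have hslope := hasDerivAt_iff_tendsto_slope.1 hd
    have heq : ∀ u : ℝ, u ≠ 0 →
        slope (fun u => ∫ s in (0:ℝ)..u, extCb f s) 0 u = cesaroFun f u := by
      intro u hu
      simp [slope, cesaroFun, hu, intervalIntegral.integral_same, div_eq_inv_mul, one_div]
    have h1 : Tendsto (cesaroFun f) (𝓝[≠] (0:ℝ)) (𝓝 (f ⟨0, Set.self_mem_Ici⟩)) := by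
      have : extCb f 0 = f ⟨0, Set.self_mem_Ici⟩ := by
        simp [extCb]
      rw [← this]
      refine hslope.congr' ?_
      filter_upwards [self_mem_nhdsWithin] with u hu
      exact heq u hu
    rw [ContinuousAt, ← nhdsNE_sup_pure]
    rw [tendsto_sup]
    refine ⟨by simpa [cesaroFun] using h1, ?_⟩
    simpa [cesaroFun] using tendsto_pure_nhds (cesaroFun f) 0
  · have hcont : ContinuousAt (fun u => (1/u) * ∫ s in (0:ℝ)..u, extCb f s) t := by
      refine ContinuousAt.mul ?_ ?_
      · exact (continuousAt_const.div continuousAt_id ht)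
      · exact (intervalIntegral.continuous_primitive (extCb_intervalIntegrable f) 0).continuousAt
    refine hcont.congr ?_
    filter_upwards [isOpen_ne.mem_nhds ht] with u hu
    simp [cesaroFun, hu]

lemma cesaroFun_norm_le (f : Cb) (t : ℝ) : ‖cesaroFun f t‖ ≤ ‖f‖ := by
  unfold cesaroFun
  by_cases ht : t = (0:ℝ)
  · simp only [ht, if_pos rfl]
    exact f.norm_coe_le_norm _
  · simp only [if_neg ht]
    have hI : ‖∫ s in (0:ℝ)..t, extCb f s‖ ≤ ‖f‖ * |t - 0| :=
      intervalIntegral.norm_integral_le_of_norm_le_const fun x _ => extCb_norm_le f x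
    rw [norm_mul]
    calc ‖(1:ℝ)/t‖ * ‖∫ s in (0:ℝ)..t, extCb f s‖ ≤ ‖(1:ℝ)/t‖ * (‖f‖ * |t - 0|) := by
          exact mul_le_mul_of_nonneg_left hI (norm_nonneg _)
      _ = ‖f‖ := by
          rw [sub_zero, Real.norm_eq_abs, abs_div, abs_one]
          field_simp [abs_ne_zero.2 ht]

noncomputable def cesaroCb (f : Cb) : Cb :=
  BoundedContinuousFunction.ofNormedAddCommGroup (fun t : Set.Ici (0:ℝ) => cesaroFun f t.1)
    ((cesaroFun_continuous f).comp continuous_subtype_val) ‖f‖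
    (fun t => cesaroFun_norm_le f t.1)

lemma cesaroCb_apply (f : Cb) (t : Set.Ici (0:ℝ)) : cesaroCb f t = cesaroFun f t.1 := rfl

lemma isCesaroOfCb_cesaroCb (f : Cb) : IsCesaroOfCb (cesaroCb f) f := by
  constructor
  · simp [cesaroCb_apply, cesaroFun]
  · intro t ht
    rw [cesaroCb_apply]
    unfold cesaroFun
    rw [if_neg ht.ne']

lemma IsCesaroOfCb.eq_cesaroCb {F f : Cb} (h : IsCesaroOfCb F f) : F = cesaroCb f := by
  ext t
  rcases eq_or_lt_of_le (Set.mem_Ici.1 t.2) with h0 | h0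
  · have ht : t = ⟨0, Set.self_mem_Ici⟩ := Subtype.ext h0.symm
    rw [ht, h.1, cesaroCb_apply]
    simp [cesaroFun]
  · rw [h.2 t h0, cesaroCb_apply]
    unfold cesaroFun
    rw [if_neg h0.ne']

end Stage1
-- sample linear map pieces test
noncomputable def sampleSeq (f : BoundedContinuousFunction (Set.Ici (0:ℝ)) ℝ) : lp (fun _ : ℕ => ℝ) ∞ :=
  ⟨fun n => f ⟨(n : ℝ), Set.mem_Ici.2 (Nat.cast_nonneg n)⟩,
   memℓp_infty ⟨‖f‖, by rintro r ⟨n, rfl⟩; exact f.norm_coe_le_norm _⟩⟩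

lemma sampleSeq_apply (f : BoundedContinuousFunction (Set.Ici (0:ℝ)) ℝ) (n : ℕ) :
    sampleSeq f n = f ⟨(n : ℝ), Set.mem_Ici.2 (Nat.cast_nonneg n)⟩ := rfl

noncomputable def sampleL : BoundedContinuousFunction (Set.Ici (0:ℝ)) ℝ →ₗ[ℝ] lp (fun _ : ℕ => ℝ) ∞ where
  toFun := sampleSeq
  map_add' f g := by
    apply lp.ext
    funext n
    rw [lp.coeFn_add]
    rfl
  map_smul' c f := by
    apply lp.ext
    funext n
    rw [lp.coeFn_smul]
    rfl

lemma lp_one_apply (n : ℕ) : (1 : lp (fun _ : ℕ => ℝ) ∞) n = 1 := by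
  rw [lp.infty_coeFn_one]; rfl

lemma state_abs_le_cb {γ : Cb →ₗ[ℝ] ℝ}
    (hpos : ∀ f : Cb, (∀ t, 0 ≤ f t) → 0 ≤ γ f) (hone : γ 1 = 1)
    (k : Cb) {ε : ℝ} (hk : ∀ t, |k t| ≤ ε) : |γ k| ≤ ε := by
  have h1 : 0 ≤ γ (ε • (1:Cb) - k) := by
    apply hpos
    intro t
    have := (abs_le.1 (hk t)).2
    simp only [BoundedContinuousFunction.coe_sub, Pi.sub_apply,
      BoundedContinuousFunction.coe_smul, Pi.smul_apply,
      BoundedContinuousFunction.coe_one, Pi.one_apply, smul_eq_mul, mul_one]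
    linarith
  have h2 : 0 ≤ γ (ε • (1:Cb) + k) := by
    apply hpos
    intro t
    have := (abs_le.1 (hk t)).1
    simp only [BoundedContinuousFunction.coe_add, Pi.add_apply,
      BoundedContinuousFunction.coe_smul, Pi.smul_apply,
      BoundedContinuousFunction.coe_one, Pi.one_apply, smul_eq_mul, mul_one]
    linarith
  rw [map_sub, LinearMap.map_smul, hone, smul_eq_mul, mul_one] at h1
  rw [map_add, LinearMap.map_smul, hone, smul_eq_mul, mul_one] at h2
  exact abs_le.2 ⟨by linarith, by linarith⟩

lemma state_abs_le_lp {σ : lp (fun _ : ℕ => ℝ) ∞ →ₗ[ℝ] ℝ}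
    (hpos : ∀ v : lp (fun _ : ℕ => ℝ) ∞, (∀ n, 0 ≤ v n) → 0 ≤ σ v) (hone : σ 1 = 1)
    (v : lp (fun _ : ℕ => ℝ) ∞) {ε : ℝ} (hv : ∀ n, |v n| ≤ ε) : |σ v| ≤ ε := by
  have h1 : 0 ≤ σ (ε • (1 : lp (fun _ : ℕ => ℝ) ∞) - v) := by
    apply hpos
    intro n
    have h := (abs_le.1 (hv n)).2
    have e1 : (ε • (1 : lp (fun _ : ℕ => ℝ) ∞) - v) n = ε * 1 - v n := by
      rw [lp.coeFn_sub, Pi.sub_apply, lp.coeFn_smul, Pi.smul_apply, lp_one_apply, smul_eq_mul]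
    rw [e1]; linarith
  have h2 : 0 ≤ σ (ε • (1 : lp (fun _ : ℕ => ℝ) ∞) + v) := by
    apply hpos
    intro n
    have h := (abs_le.1 (hv n)).1
    have e1 : (ε • (1 : lp (fun _ : ℕ => ℝ) ∞) + v) n = ε * 1 + v n := by
      rw [lp.coeFn_add, Pi.add_apply, lp.coeFn_smul, Pi.smul_apply, lp_one_apply, smul_eq_mul]
    rw [e1]; linarith
  rw [map_sub, LinearMap.map_smul, hone, smul_eq_mul, mul_one] at h1
  rw [map_add, LinearMap.map_smul, hone, smul_eq_mul, mul_one] at h2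
  exact abs_le.2 ⟨by linarith, by linarith⟩

/-- cutoff function: 1 on [0, M], 0 on [M+1, ∞). -/
noncomputable def cutoffCb (M : ℝ) : Cb :=
  BoundedContinuousFunction.ofNormedAddCommGroup
    (fun t : Set.Ici (0:ℝ) => min 1 (max 0 (M + 1 - t.1)))
    (Continuous.min continuous_const
      (Continuous.max continuous_const (continuous_const.sub continuous_subtype_val))) 1
    (fun t => by
      rw [Real.norm_eq_abs, abs_le]
      constructor
      · have : (0:ℝ) ≤ max 0 (M + 1 - t.1) := le_max_left _ _
        have := le_min (zero_le_one) this
        linarith [le_min zero_le_one (le_max_left (0:ℝ) (M + 1 - t.1))]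
      · exact min_le_left _ _)

lemma cutoffCb_apply (M : ℝ) (t : Set.Ici (0:ℝ)) :
    cutoffCb M t = min 1 (max 0 (M + 1 - t.1)) := rfl

lemma cutoffCb_nonneg (M : ℝ) (t : Set.Ici (0:ℝ)) : 0 ≤ cutoffCb M t := by
  rw [cutoffCb_apply]; exact le_min zero_le_one (le_max_left _ _)

lemma cutoffCb_le_one (M : ℝ) (t : Set.Ici (0:ℝ)) : cutoffCb M t ≤ 1 := by
  rw [cutoffCb_apply]; exact min_le_left _ _

lemma cutoffCb_eq_zero (M : ℝ) (t : Set.Ici (0:ℝ)) (ht : M + 1 ≤ t.1) : cutoffCb M t = 0 := by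
  rw [cutoffCb_apply, max_eq_left (by linarith), min_eq_right zero_le_one]

lemma cutoffCb_eq_one (M : ℝ) (t : Set.Ici (0:ℝ)) (ht : t.1 ≤ M) : cutoffCb M t = 1 := by
  rw [cutoffCb_apply, min_eq_left]
  exact le_max_of_le_right (by linarith)

lemma singular_vanish_cb {γ : Cb →ₗ[ℝ] ℝ} (hγ : IsSingularStateCb γ) (h : Cb)
    (hh : ∀ ε : ℝ, 0 < ε → ∃ M : ℝ, ∀ t : Set.Ici (0:ℝ), M ≤ t.1 → |h t| ≤ ε) :
    γ h = 0 := by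
  obtain ⟨hpos, hone, hsing⟩ := hγ
  have key : ∀ ε : ℝ, 0 < ε → |γ h| ≤ ε := by
    intro ε hε
    obtain ⟨M, hM⟩ := hh ε hε
    have hprod : γ (h * cutoffCb M) = 0 := by
      apply hsing
      refine ⟨M + 1, fun t ht => ?_⟩
      rw [BoundedContinuousFunction.mul_apply, cutoffCb_eq_zero M t ht, mul_zero]
    have hrest : |γ (h - h * cutoffCb M)| ≤ ε := by
      apply state_abs_le_cb hpos hone
      intro t
      rw [BoundedContinuousFunction.sub_apply, BoundedContinuousFunction.mul_apply]
      rcases le_total t.1 M with htM | htM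
      · rw [cutoffCb_eq_one M t htM, mul_one, sub_self, abs_zero]
        exact hε.le
      · have h1 : |h t| ≤ ε := hM t htM
        have h2 : |1 - cutoffCb M t| ≤ 1 := by
          rw [abs_le]
          constructor
          · linarith [cutoffCb_le_one M t]
          · linarith [cutoffCb_nonneg M t]
        calc |h t - h t * cutoffCb M t| = |h t| * |1 - cutoffCb M t| := by
              rw [← abs_mul]; ring_nf
          _ ≤ ε * 1 := mul_le_mul h1 h2 (abs_nonneg _) hε.le
          _ = ε := mul_one ε
    have : γ h = γ (h - h * cutoffCb M) + γ (h * cutoffCb M) := by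
      rw [← map_add]; ring_nf
    rw [this, hprod, add_zero]
    exact hrest
  by_contra hne
  have : 0 < |γ h| := abs_pos.2 hne
  linarith [key (|γ h| / 2) (by linarith)]

noncomputable def truncLp (v : lp (fun _ : ℕ => ℝ) ∞) (N : ℕ) : lp (fun _ : ℕ => ℝ) ∞ :=
  ⟨fun n => if n < N then v n else 0,
   memℓp_infty ⟨‖v‖, by
    rintro r ⟨n, rfl⟩
    by_cases hn : n < N
    · simp only [hn, if_pos]
      exact lp.norm_apply_le_norm ENNReal.top_ne_zero v n
    · simp only [hn, if_neg, not_false_iff, norm_zero]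
      exact norm_nonneg v⟩⟩

lemma truncLp_apply (v : lp (fun _ : ℕ => ℝ) ∞) (N n : ℕ) :
    truncLp v N n = if n < N then v n else 0 := rfl

lemma singular_vanish_lp {σ : lp (fun _ : ℕ => ℝ) ∞ →ₗ[ℝ] ℝ} (hσ : IsSingularStateLp σ)
    (v : lp (fun _ : ℕ => ℝ) ∞)
    (hv : ∀ ε : ℝ, 0 < ε → ∃ N : ℕ, ∀ n : ℕ, N ≤ n → |v n| ≤ ε) :
    σ v = 0 := by
  obtain ⟨hpos, hone, hsing⟩ := hσ
  have key : ∀ ε : ℝ, 0 < ε → |σ v| ≤ ε := by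
    intro ε hε
    obtain ⟨N, hN⟩ := hv ε hε
    have htr : σ (truncLp v N) = 0 := by
      apply hsing
      apply Set.Finite.subset (Set.finite_Iio N)
      intro n hn
      simp only [Set.mem_setOf_eq, truncLp_apply] at hn
      by_contra hnN
      simp only [Set.mem_Iio, not_lt] at hnN
      exact hn (if_neg (not_lt.2 hnN))
    have hrest : |σ (v - truncLp v N)| ≤ ε := by
      apply state_abs_le_lp hpos hone
      intro n
      have e1 : (v - truncLp v N) n = v n - truncLp v N n := by
        rw [lp.coeFn_sub, Pi.sub_apply]
      rw [e1, truncLp_apply]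
      by_cases hn : n < N
      · rw [if_pos hn, sub_self, abs_zero]; exact hε.le
      · rw [if_neg hn, sub_zero]
        exact hN n (not_lt.1 hn)
    have : σ v = σ (v - truncLp v N) + σ (truncLp v N) := by
      rw [← map_add]; ring_nf
    rw [this, htr, add_zero]
    exact hrest
  by_contra hne
  have : 0 < |σ v| := abs_pos.2 hne
  linarith [key (|σ v| / 2) (by linarith)]
section Ext
/-- slope sequence for piecewise linear interpolation -/
noncomputable def deltaFun (a : ℕ → ℝ) : ℝ → ℝ := fun s => a (⌊s⌋₊ + 1) - a ⌊s⌋₊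

lemma deltaFun_measurable (a : ℕ → ℝ) : Measurable (deltaFun a) :=
  (measurable_from_nat.comp (Nat.measurable_floor.add_const 1)).sub
    (measurable_from_nat.comp Nat.measurable_floor)

lemma deltaFun_bound (a : ℕ → ℝ) {c : ℝ} (hc : ∀ n, ‖a n‖ ≤ c) (s : ℝ) :
    ‖deltaFun a s‖ ≤ 2 * c := by
  calc ‖a (⌊s⌋₊ + 1) - a ⌊s⌋₊‖ ≤ ‖a (⌊s⌋₊ + 1)‖ + ‖a ⌊s⌋₊‖ := norm_sub_le _ _
    _ ≤ c + c := add_le_add (hc _) (hc _)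
    _ = 2 * c := by ring

lemma deltaFun_intervalIntegrable (a : ℕ → ℝ) {c : ℝ} (hc : ∀ n, ‖a n‖ ≤ c) (x y : ℝ) :
    IntervalIntegrable (deltaFun a) volume x y := by
  rw [intervalIntegrable_iff]
  apply Measure.integrableOn_of_bounded (M := 2 * c)
  · exact (measure_Ioc_lt_top).ne
  · exact (deltaFun_measurable a).aestronglyMeasurable
  · exact Eventually.of_forall fun s => deltaFun_bound a hc s

/-- piecewise linear extension of a sequence -/
noncomputable def extFun (a : ℕ → ℝ) : ℝ → ℝ :=
  fun t => a 0 + ∫ s in (0:ℝ)..t, deltaFun a s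

lemma extFun_continuous (a : ℕ → ℝ) {c : ℝ} (hc : ∀ n, ‖a n‖ ≤ c) :
    Continuous (extFun a) :=
  continuous_const.add
    (intervalIntegral.continuous_primitive (deltaFun_intervalIntegrable a hc) 0)

lemma integral_deltaFun_piece (a : ℕ → ℝ) {c : ℝ} (hc : ∀ n, ‖a n‖ ≤ c) (n : ℕ) {t : ℝ}
    (h1 : (n : ℝ) ≤ t) (h2 : t ≤ (n : ℝ) + 1) :
    ∫ s in (n : ℝ)..t, deltaFun a s = (t - n) * (a (n + 1) - a n) := by
  have hae : ∀ᵐ s ∂(volume : Measure ℝ), s ∈ Set.uIoc (n : ℝ) t → deltaFun a s = a (n+1) - a n := by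
    have h0 : ∀ᵐ s ∂(volume : Measure ℝ), s ≠ ((n : ℝ) + 1) := by
      have : (volume : Measure ℝ) {((n : ℝ) + 1)} = 0 := measure_singleton _
      filter_upwards [measure_eq_zero_iff_ae_notMem.1 this] with s hs
      simpa using hs
    filter_upwards [h0] with s hs hmem
    rw [Set.uIoc_of_le h1] at hmem
    have hs1 : (n : ℝ) < s := hmem.1
    have hs2 : s ≤ (n : ℝ) + 1 := le_trans hmem.2 h2
    have hfl : ⌊s⌋₊ = n := by
      rw [Nat.floor_eq_iff (le_trans (Nat.cast_nonneg n) hs1.le)]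
      exact ⟨hs1.le, lt_of_le_of_ne hs2 hs⟩
    simp [deltaFun, hfl]
  rw [intervalIntegral.integral_congr_ae hae, intervalIntegral.integral_const, smul_eq_mul]

lemma integral_deltaFun_nat (a : ℕ → ℝ) {c : ℝ} (hc : ∀ n, ‖a n‖ ≤ c) (n : ℕ) :
    ∫ s in (0:ℝ)..(n : ℝ), deltaFun a s = a n - a 0 := by
  induction n with
  | zero => simp
  | succ m ih =>
    have hadd : ∫ s in (0:ℝ)..((m : ℝ) + 1), deltaFun a s =
        (∫ s in (0:ℝ)..(m : ℝ), deltaFun a s) + ∫ s in (m : ℝ)..((m : ℝ) + 1), deltaFun a s :=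
      (intervalIntegral.integral_add_adjacent_intervals
        (deltaFun_intervalIntegrable a hc 0 m) (deltaFun_intervalIntegrable a hc m (m+1))).symm
    push_cast
    rw [hadd, ih, integral_deltaFun_piece a hc m (by linarith : (m:ℝ) ≤ (m:ℝ)+1) (le_refl _)]
    ring

lemma extFun_eval (a : ℕ → ℝ) {c : ℝ} (hc : ∀ n, ‖a n‖ ≤ c) (n : ℕ) {t : ℝ}
    (h1 : (n : ℝ) ≤ t) (h2 : t ≤ (n : ℝ) + 1) :
    extFun a t = a n + (t - n) * (a (n + 1) - a n) := by
  unfold extFun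
  have hsplit : ∫ s in (0:ℝ)..t, deltaFun a s =
      (∫ s in (0:ℝ)..(n : ℝ), deltaFun a s) + ∫ s in (n : ℝ)..t, deltaFun a s :=
    (intervalIntegral.integral_add_adjacent_intervals
      (deltaFun_intervalIntegrable a hc 0 n) (deltaFun_intervalIntegrable a hc n t)).symm
  rw [hsplit, integral_deltaFun_nat a hc, integral_deltaFun_piece a hc n h1 h2]
  ring

lemma extFun_eval_floor (a : ℕ → ℝ) {c : ℝ} (hc : ∀ n, ‖a n‖ ≤ c) {t : ℝ} (ht : 0 ≤ t) :
    extFun a t = a ⌊t⌋₊ + (t - ⌊t⌋₊) * (a (⌊t⌋₊ + 1) - a ⌊t⌋₊) :=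
  extFun_eval a hc ⌊t⌋₊ (Nat.floor_le ht) (Nat.lt_floor_add_one t).le

lemma extFun_eval_nat (a : ℕ → ℝ) {c : ℝ} (hc : ∀ n, ‖a n‖ ≤ c) (n : ℕ) :
    extFun a (n : ℝ) = a n := by
  rw [extFun_eval a hc n (le_refl _) (by linarith)]
  simp

/-- convex combination representation -/
lemma extFun_bound (a : ℕ → ℝ) {c : ℝ} (hc : ∀ n, ‖a n‖ ≤ c) {t : ℝ} (ht : 0 ≤ t) :
    ‖extFun a t‖ ≤ c := by
  rw [extFun_eval_floor a hc ht]
  set n := ⌊t⌋₊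
  have h1 : (n : ℝ) ≤ t := Nat.floor_le ht
  have h2 : t - n ≤ 1 := by have := (Nat.lt_floor_add_one t).le; simp only [n]; linarith
  have h3 : 0 ≤ t - (n:ℝ) := by linarith
  have : a n + (t - n) * (a (n + 1) - a n) = (1 - (t - n)) * a n + (t - n) * a (n + 1) := by ring
  rw [this, Real.norm_eq_abs]
  calc |(1 - (t - n)) * a n + (t - n) * a (n + 1)|
      ≤ |(1 - (t - n)) * a n| + |(t - n) * a (n + 1)| := abs_add_le _ _
    _ = (1 - (t - n)) * |a n| + (t - n) * |a (n + 1)| := by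
        rw [abs_mul, abs_mul, abs_of_nonneg (by linarith : (0:ℝ) ≤ 1 - (t - n)),
          abs_of_nonneg h3]
    _ ≤ (1 - (t - n)) * c + (t - n) * c := by
        have hc1 : |a n| ≤ c := hc n
        have hc2 : |a (n+1)| ≤ c := hc (n+1)
        have hcnn : (0:ℝ) ≤ c := le_trans (abs_nonneg _) hc1
        apply add_le_add
        · exact mul_le_mul_of_nonneg_left hc1 (by linarith)
        · exact mul_le_mul_of_nonneg_left hc2 h3
    _ = c := by ring

lemma extFun_nonneg (a : ℕ → ℝ) {c : ℝ} (hc : ∀ n, ‖a n‖ ≤ c) (ha : ∀ n, 0 ≤ a n)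
    {t : ℝ} (ht : 0 ≤ t) : 0 ≤ extFun a t := by
  rw [extFun_eval_floor a hc ht]
  set n := ⌊t⌋₊
  have h2 : t - n ≤ 1 := (by linarith [(Nat.lt_floor_add_one t).le] : t - (n:ℝ) ≤ 1)
  have h3 : 0 ≤ t - (n:ℝ) := by linarith [Nat.floor_le ht]
  have : a n + (t - n) * (a (n + 1) - a n) = (1 - (t - n)) * a n + (t - n) * a (n + 1) := by ring
  rw [this]
  have h4 := ha n; have h5 := ha (n+1)
  have : (0:ℝ) ≤ 1 - (t - n) := by linarith
  nlinarith

/-- the piecewise linear extension as an element of Cb -/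
noncomputable def extLCb (v : lp (fun _ : ℕ => ℝ) ∞) : Cb :=
  BoundedContinuousFunction.ofNormedAddCommGroup (fun t : Set.Ici (0:ℝ) => extFun (⇑v) t.1)
    ((extFun_continuous (⇑v) (fun n => lp.norm_apply_le_norm ENNReal.top_ne_zero v n)).comp
      continuous_subtype_val) ‖v‖
    (fun t => extFun_bound (⇑v) (fun n => lp.norm_apply_le_norm ENNReal.top_ne_zero v n) t.2)

lemma extLCb_apply (v : lp (fun _ : ℕ => ℝ) ∞) (t : Set.Ici (0:ℝ)) :
    extLCb v t = extFun (⇑v) t.1 := rfl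

end Ext
section Toolbox

noncomputable def Lfun (t : ℝ) : ℝ := Real.log (1 + Real.exp t)

lemma Lfun_pos (t : ℝ) : 0 < Lfun t := Real.log_pos (by linarith [Real.exp_pos t])

lemma Lfun_mono {t s : ℝ} (h : t ≤ s) : Lfun t ≤ Lfun s := by
  apply (Real.log_le_log_iff (by linarith [Real.exp_pos t]) (by linarith [Real.exp_pos s])).2
  have := Real.exp_le_exp.2 h
  linarith

lemma le_Lfun (t : ℝ) : t ≤ Lfun t := by
  have h1 : Real.exp t ≤ 1 + Real.exp t := by linarith
  have := (Real.log_le_log_iff (Real.exp_pos t) (by linarith [Real.exp_pos t])).2 h1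
  rwa [Real.log_exp] at this

lemma Lfun_sub_le {k s : ℝ} (h : k ≤ s) : Lfun s - Lfun k ≤ s - k := by
  have h1 : (1:ℝ) + Real.exp s ≤ Real.exp (s - k) * (1 + Real.exp k) := by
    have he : Real.exp (s - k) * Real.exp k = Real.exp s := by
      rw [← Real.exp_add]; ring_nf
    have h2 : (1:ℝ) ≤ Real.exp (s - k) := Real.one_le_exp (by linarith)
    nlinarith [Real.exp_pos k]
  have h3 := (Real.log_le_log_iff (by linarith [Real.exp_pos s])
    (by positivity)).2 h1
  rw [Real.log_mul (Real.exp_ne_zero _) (by positivity : (1:ℝ) + Real.exp k ≠ 0),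
    Real.log_exp] at h3
  unfold Lfun
  linarith

lemma log_two_third : (1:ℝ) / Real.log 2 ≤ 3 := by
  have h := Real.log_two_gt_d9
  rw [div_le_iff₀ (by linarith : (0:ℝ) < Real.log 2)]
  linarith

lemma sqrt_le_self' {x : ℝ} (h : 1 ≤ x) : Real.sqrt x ≤ x := by
  have : Real.sqrt x ≤ Real.sqrt (x ^ 2) := Real.sqrt_le_sqrt (by nlinarith)
  rwa [Real.sqrt_sq (by linarith)] at this

lemma one_div_Lfun_le (k : ℕ) :
    1 / Lfun k ≤ 3 * (Real.sqrt ((k:ℝ) + 1) - Real.sqrt k) := by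
  have hr : Real.sqrt ((k:ℝ) + 1) - Real.sqrt k = 1 / (Real.sqrt ((k:ℝ)+1) + Real.sqrt k) := by
    have hm : (Real.sqrt ((k:ℝ)+1) - Real.sqrt k) * (Real.sqrt ((k:ℝ)+1) + Real.sqrt k) = 1 := by
      have e1 : Real.sqrt ((k:ℝ)+1) * Real.sqrt ((k:ℝ)+1) = (k:ℝ)+1 :=
        Real.mul_self_sqrt (by positivity)
      have e2 : Real.sqrt (k:ℝ) * Real.sqrt (k:ℝ) = (k:ℝ) :=
        Real.mul_self_sqrt (by positivity)
      nlinarith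
    have hden : 0 < Real.sqrt ((k:ℝ)+1) + Real.sqrt k := by
      have : (0:ℝ) < Real.sqrt ((k:ℝ)+1) := Real.sqrt_pos.2 (by positivity)
      have := Real.sqrt_nonneg (k:ℝ)
      linarith
    field_simp
    nlinarith
  rcases Nat.eq_zero_or_pos k with hk | hk
  · subst hk
    simp only [Nat.cast_zero, Real.sqrt_zero, zero_add, Real.sqrt_one]
    have : Lfun 0 = Real.log 2 := by
      unfold Lfun; rw [Real.exp_zero]; norm_num
    rw [this]
    calc (1:ℝ)/Real.log 2 ≤ 3 := log_two_third
      _ = 3 * (1 - 0) := by ring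
  · have hk1 : (1:ℝ) ≤ (k:ℝ) := by exact_mod_cast hk
    have hLk : (k:ℝ) ≤ Lfun k := le_Lfun k
    have hLpos : (0:ℝ) < Lfun k := Lfun_pos k
    have step1 : 1 / Lfun k ≤ 1 / (k:ℝ) := one_div_le_one_div_of_le (by linarith) hLk
    have hden : 0 < Real.sqrt ((k:ℝ)+1) + Real.sqrt k := by
      have : (0:ℝ) < Real.sqrt ((k:ℝ)+1) := Real.sqrt_pos.2 (by positivity)
      have := Real.sqrt_nonneg (k:ℝ)
      linarith
    have hsum_le : Real.sqrt ((k:ℝ)+1) + Real.sqrt k ≤ 3 * k := by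
      have h1 : Real.sqrt ((k:ℝ)+1) ≤ (k:ℝ)+1 := sqrt_le_self' (by linarith)
      have h2 : Real.sqrt (k:ℝ) ≤ (k:ℝ) := sqrt_le_self' hk1
      linarith
    have step2 : 1 / (k:ℝ) ≤ 3 / (Real.sqrt ((k:ℝ)+1) + Real.sqrt k) := by
      rw [div_le_div_iff₀ (by linarith) hden]
      linarith
    calc 1 / Lfun k ≤ 1 / (k:ℝ) := step1
      _ ≤ 3 / (Real.sqrt ((k:ℝ)+1) + Real.sqrt k) := step2
      _ = 3 * (Real.sqrt ((k:ℝ)+1) - Real.sqrt k) := by rw [hr]; ring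

lemma sum_one_div_Lfun_le (n : ℕ) :
    ∑ k ∈ Finset.range n, 1 / Lfun k ≤ 3 * Real.sqrt n := by
  calc ∑ k ∈ Finset.range n, 1 / Lfun k
      ≤ ∑ k ∈ Finset.range n, 3 * (Real.sqrt ((k:ℝ)+1) - Real.sqrt k) :=
        Finset.sum_le_sum fun k _ => one_div_Lfun_le k
    _ = 3 * ∑ k ∈ Finset.range n, (Real.sqrt ((k+1 : ℕ) : ℝ) - Real.sqrt (k : ℝ)) := by
        rw [Finset.mul_sum]
        congr 1
        funext k
        push_cast
        ring
    _ = 3 * (Real.sqrt (n : ℝ) - Real.sqrt ((0:ℕ) : ℝ)) := by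
        rw [Finset.sum_range_sub (fun m : ℕ => Real.sqrt (m : ℝ))]
    _ = 3 * Real.sqrt n := by simp

end Toolbox

section MainEstimate

lemma g_subint {g : ℝ → ℝ} (hint : ∀ t : ℝ, 1 ≤ t → IntervalIntegrable g volume 1 t)
    {u v : ℝ} (hu : 1 ≤ u) (huv : u ≤ v) : IntervalIntegrable g volume u v := by
  apply (hint v (le_trans hu huv)).mono_set
  rw [Set.uIcc_of_le huv, Set.uIcc_of_le (le_trans hu huv)]
  exact Set.Icc_subset_Icc hu (le_refl v)

lemma G_mono {g : ℝ → ℝ} (hg0 : ∀ s : ℝ, 1 ≤ s → 0 ≤ g s)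
    (hint : ∀ t : ℝ, 1 ≤ t → IntervalIntegrable g volume 1 t)
    {u v : ℝ} (hu : 1 ≤ u) (huv : u ≤ v) :
    (∫ s in (1:ℝ)..u, g s) ≤ ∫ s in (1:ℝ)..v, g s := by
  have hadd := intervalIntegral.integral_add_adjacent_intervals (μ := volume)
    (hint u hu) (g_subint hint hu huv)
  have hpos : 0 ≤ ∫ s in u..v, g s :=
    intervalIntegral.integral_nonneg huv (fun s hs => hg0 s (le_trans hu hs.1))
  linarith

set_option maxHeartbeats 2000000 in
lemma main_estimate
    (g : ℝ → ℝ) (hg0 : ∀ s : ℝ, 1 ≤ s → 0 ≤ g s)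
    (hint : ∀ t : ℝ, 1 ≤ t → IntervalIntegrable g MeasureTheory.volume 1 t)
    (B : ℝ) (hB : ∀ t : ℝ, 1 ≤ t → (1 / Real.log (1 + t)) * ∫ s in (1:ℝ)..t, g s ≤ B)
    (fg : ℝ → ℝ)
    (hfg : ∀ t : ℝ, fg t =
      (1 / Real.log (1 + Real.exp t)) * ∫ s in (1:ℝ)..(Real.exp t), g s)
    (F : Cb) (hF : ∀ t : Set.Ici (0:ℝ), F t = fg t.1)
    (x : lp (fun _ : ℕ => ℝ) ∞) (hx : ∀ k : ℕ, x k = fg k) :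
    ∀ n : ℕ, 1 ≤ n → ∀ t : ℝ, (n:ℝ) ≤ t → t ≤ (n:ℝ) + 1 →
      |cesaroFun F t - extFun (⇑(cesaroLp x)) t| ≤ 13 * B / Real.sqrt n := by
  set G : ℝ → ℝ := fun u => ∫ s in (1:ℝ)..u, g s with hGdef
  have hB0 : 0 ≤ B := by
    have h := hB 1 le_rfl
    simpa using h
  have hGmono : ∀ u v : ℝ, 1 ≤ u → u ≤ v → G u ≤ G v :=
    fun u v hu huv => G_mono hg0 hint hu huv
  have hGnn : ∀ u : ℝ, 1 ≤ u → 0 ≤ G u := by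
    intro u hu
    have h := hGmono 1 u le_rfl hu
    simpa [hGdef] using h
  have hGleB : ∀ u : ℝ, 1 ≤ u → G u ≤ B * Real.log (1 + u) := by
    intro u hu
    have h := hB u hu
    have hl : 0 < Real.log (1 + u) := Real.log_pos (by linarith)
    have h2 : G u / Real.log (1 + u) ≤ B := by
      rw [div_eq_mul_inv, mul_comm, ← one_div]
      exact h
    exact (div_le_iff₀ hl).1 h2
  have hfg' : ∀ t : ℝ, fg t = G (Real.exp t) / Lfun t := by
    intro t
    rw [hfg t, one_div, div_eq_mul_inv, mul_comm]
    rfl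
  have hexp1 : ∀ t : ℝ, 0 ≤ t → (1:ℝ) ≤ Real.exp t := fun t ht => Real.one_le_exp ht
  have hGLB : ∀ t : ℝ, 0 ≤ t → G (Real.exp t) ≤ B * Lfun t := by
    intro t ht
    exact hGleB (Real.exp t) (hexp1 t ht)
  have hfg_nonneg : ∀ t : ℝ, 0 ≤ t → 0 ≤ fg t := by
    intro t ht
    rw [hfg' t]
    exact div_nonneg (hGnn _ (hexp1 t ht)) (Lfun_pos t).le
  have hfg_leB : ∀ t : ℝ, 0 ≤ t → fg t ≤ B := by
    intro t ht
    rw [hfg' t, div_le_iff₀ (Lfun_pos t)]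
    have := hGLB t ht
    nlinarith
  have hfg_abs : ∀ t : ℝ, 0 ≤ t → |fg t| ≤ B := by
    intro t ht
    rw [abs_of_nonneg (hfg_nonneg t ht)]
    exact hfg_leB t ht
  have hextCb : ∀ s : ℝ, 0 ≤ s → extCb F s = fg s := by
    intro s hs
    rw [extCb_apply_of_nonneg F hs, hF]
  -- the per-piece estimate
  have piece : ∀ k : ℕ,
      |(∫ s in (k:ℝ)..((k:ℝ)+1), extCb F s) - fg k|
        ≤ (G (Real.exp ((k:ℝ)+1)) - G (Real.exp k)) / Lfun k + B / Lfun k := by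
    intro k
    have hk0 : (0:ℝ) ≤ (k:ℝ) := Nat.cast_nonneg k
    set U : ℝ := (G (Real.exp ((k:ℝ)+1)) - G (Real.exp k)) / Lfun k with hU
    have hUnn : 0 ≤ U := by
      apply div_nonneg _ (Lfun_pos k).le
      have := hGmono (Real.exp k) (Real.exp ((k:ℝ)+1)) (hexp1 _ hk0)
        (Real.exp_le_exp.2 (by linarith))
      linarith
    have hBL : 0 ≤ B / Lfun k := div_nonneg hB0 (Lfun_pos k).le
    have hup : ∀ s ∈ Set.Icc (k:ℝ) ((k:ℝ)+1), extCb F s ≤ fg k + U := by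
      intro s hs
      have hs0 : (0:ℝ) ≤ s := le_trans hk0 hs.1
      rw [hextCb s hs0, hfg' s, hfg' k]
      have h1 : G (Real.exp s) / Lfun s ≤ G (Real.exp ((k:ℝ)+1)) / Lfun k := by
        apply div_le_div₀ (hGnn _ (hexp1 _ (by linarith)))
          (hGmono _ _ (hexp1 _ hs0) (Real.exp_le_exp.2 hs.2)) (Lfun_pos k)
          (Lfun_mono hs.1)
      have h2 : G (Real.exp k) / Lfun k + U = G (Real.exp ((k:ℝ)+1)) / Lfun k := by
        rw [hU]; ring
      linarith
    have hlo : ∀ s ∈ Set.Icc (k:ℝ) ((k:ℝ)+1), fg k - B / Lfun k ≤ extCb F s := by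
      intro s hs
      have hs0 : (0:ℝ) ≤ s := le_trans hk0 hs.1
      rw [hextCb s hs0, hfg' s, hfg' k]
      have hlk : 0 < Lfun k := Lfun_pos k
      have hls : 0 < Lfun s := Lfun_pos s
      have hlkls : Lfun k ≤ Lfun s := Lfun_mono hs.1
      have hGkB : G (Real.exp k) ≤ B * Lfun k := hGLB k hk0
      have hGk0 : 0 ≤ G (Real.exp k) := hGnn _ (hexp1 _ hk0)
      have hGkGs : G (Real.exp k) ≤ G (Real.exp s) :=
        hGmono _ _ (hexp1 _ hk0) (Real.exp_le_exp.2 hs.1)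
      have hd : Lfun s - Lfun k ≤ s - k := Lfun_sub_le hs.1
      have hs1 : s - k ≤ 1 := by linarith [hs.2]
      have key : G (Real.exp k) / Lfun k - B / Lfun k ≤ G (Real.exp k) / Lfun s := by
        rw [div_sub_div_same, div_le_div_iff₀ hlk hls]
        nlinarith [mul_le_mul_of_nonneg_right hGkB (sub_nonneg.2 hlkls),
          mul_le_mul_of_nonneg_left (show Lfun s - Lfun k ≤ 1 by linarith)
            (mul_nonneg hB0 hlk.le)]
      have h2 : G (Real.exp k) / Lfun s ≤ G (Real.exp s) / Lfun s :=
        div_le_div₀ (hGk0.trans hGkGs) hGkGs hls le_rfl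
      linarith
    have hInt := extCb_intervalIntegrable F (k:ℝ) ((k:ℝ)+1)
    have hle : (k:ℝ) ≤ (k:ℝ)+1 := by linarith
    have h1 : (∫ s in (k:ℝ)..((k:ℝ)+1), extCb F s)
        ≤ ∫ _s in (k:ℝ)..((k:ℝ)+1), (fg k + U) := by
      apply intervalIntegral.integral_mono_on hle hInt (intervalIntegrable_const) hup
    have h2 : (∫ _s in (k:ℝ)..((k:ℝ)+1), (fg k - B / Lfun k))
        ≤ ∫ s in (k:ℝ)..((k:ℝ)+1), extCb F s := by
      apply intervalIntegral.integral_mono_on hle (intervalIntegrable_const) hInt hlo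
    rw [intervalIntegral.integral_const, smul_eq_mul] at h1 h2
    have hlen : ((k:ℝ)+1) - (k:ℝ) = 1 := by ring
    rw [hlen, one_mul] at h1 h2
    rw [abs_le]
    constructor <;> [linarith; linarith]
  -- per-piece telescoping bound for U
  have Usub : ∀ k : ℕ,
      (G (Real.exp ((k:ℝ)+1)) - G (Real.exp k)) / Lfun k
        ≤ (fg ((k:ℝ)+1) - fg k) + B / Lfun k := by
    intro k
    have hk0 : (0:ℝ) ≤ (k:ℝ) := Nat.cast_nonneg k
    have hlk : 0 < Lfun k := Lfun_pos k
    have hlk1 : 0 < Lfun ((k:ℝ)+1) := Lfun_pos _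
    have hlkle : Lfun k ≤ Lfun ((k:ℝ)+1) := Lfun_mono (by linarith)
    have hdL : Lfun ((k:ℝ)+1) - Lfun k ≤ 1 := by
      have := Lfun_sub_le (show (k:ℝ) ≤ (k:ℝ)+1 by linarith)
      linarith
    have hGk1B : G (Real.exp ((k:ℝ)+1)) ≤ B * Lfun ((k:ℝ)+1) := hGLB _ (by linarith)
    have hGk10 : 0 ≤ G (Real.exp ((k:ℝ)+1)) := hGnn _ (hexp1 _ (by linarith))
    rw [hfg' ((k:ℝ)+1), hfg' k]
    -- reduce to: Gk1/lk - Gk1/lk1 ≤ B/lk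
    have key : G (Real.exp ((k:ℝ)+1)) / Lfun k - G (Real.exp ((k:ℝ)+1)) / Lfun ((k:ℝ)+1)
        ≤ B / Lfun k := by
      have e1 : G (Real.exp ((k:ℝ)+1)) * (Lfun ((k:ℝ)+1) - Lfun k) ≤ B * Lfun ((k:ℝ)+1) := by
        nlinarith [mul_le_mul_of_nonneg_right hGk1B (sub_nonneg.2 hlkle),
          mul_le_mul_of_nonneg_left hdL (mul_nonneg hB0 hlk1.le)]
      rw [div_sub_div _ _ hlk.ne' hlk1.ne', div_le_div_iff₀ (by positivity) hlk]
      nlinarith [mul_le_mul_of_nonneg_right e1 hlk.le]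
    have expand : (G (Real.exp ((k:ℝ)+1)) - G (Real.exp k)) / Lfun k
        = G (Real.exp ((k:ℝ)+1)) / Lfun k - G (Real.exp k) / Lfun k := by
      ring
    linarith
  -- integral over [0,m] splits into unit pieces
  have Isplit : ∀ m : ℕ, (∫ s in (0:ℝ)..(m:ℝ), extCb F s)
      = ∑ k ∈ Finset.range m, ∫ s in (k:ℝ)..((k:ℝ)+1), extCb F s := by
    intro m
    have h := intervalIntegral.sum_integral_adjacent_intervals (μ := volume)
      (a := fun k : ℕ => (k:ℝ)) (n := m) (fun k _ => extCb_intervalIntegrable F _ _)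
    push_cast at h
    exact h.symm
  have sumA : ∀ m : ℕ, |(∫ s in (0:ℝ)..(m:ℝ), extCb F s) - ∑ k ∈ Finset.range m, fg k|
      ≤ B + 6 * B * Real.sqrt m := by
    intro m
    rw [Isplit m, ← Finset.sum_sub_distrib]
    have step1 : |∑ k ∈ Finset.range m, ((∫ s in (k:ℝ)..((k:ℝ)+1), extCb F s) - fg k)|
        ≤ ∑ k ∈ Finset.range m,
          ((G (Real.exp ((k:ℝ)+1)) - G (Real.exp k)) / Lfun k + B / Lfun k) :=
      le_trans (Finset.abs_sum_le_sum_abs _ _) (Finset.sum_le_sum fun k _ => piece k)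
    have step2 : ∑ k ∈ Finset.range m,
          ((G (Real.exp ((k:ℝ)+1)) - G (Real.exp k)) / Lfun k + B / Lfun k)
        ≤ ∑ k ∈ Finset.range m, ((fg ((k:ℝ)+1) - fg k) + 2 * (B / Lfun k)) := by
      apply Finset.sum_le_sum
      intro k _
      have := Usub k
      linarith
    have step3 : ∑ k ∈ Finset.range m, ((fg ((k:ℝ)+1) - fg k) + 2 * (B / Lfun k))
        = (fg (m:ℝ) - fg 0) + 2 * B * ∑ k ∈ Finset.range m, 1 / Lfun k := by
      rw [Finset.sum_add_distrib]
      congr 1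
      · have htel := Finset.sum_range_sub (fun k : ℕ => fg (k:ℝ)) m
        simp only [Nat.cast_zero] at htel
        rw [← htel]
        apply Finset.sum_congr rfl
        intro k _
        norm_num
      · rw [Finset.mul_sum]
        apply Finset.sum_congr rfl
        intro k _
        rw [div_eq_mul_one_div B]
        ring
    have hfgm : fg (m:ℝ) - fg 0 ≤ B := by
      have h1 := hfg_leB (m:ℝ) (Nat.cast_nonneg m)
      have h2 := hfg_nonneg 0 le_rfl
      linarith
    have hsum : 2 * B * (∑ k ∈ Finset.range m, 1 / Lfun k) ≤ 2 * B * (3 * Real.sqrt m) :=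
      mul_le_mul_of_nonneg_left (sum_one_div_Lfun_le m) (by positivity)
    have := step1.trans (le_trans step2 (le_of_eq step3))
    nlinarith [this]
  -- final combination
  intro n hn t hnt htn1
  have hn1 : (1:ℝ) ≤ (n:ℝ) := by exact_mod_cast hn
  have hnpos : (0:ℝ) < (n:ℝ) := by linarith
  have htpos : (0:ℝ) < t := by linarith
  have hsq : (0:ℝ) < Real.sqrt n := Real.sqrt_pos.2 hnpos
  have hsqn : Real.sqrt (n:ℝ) ≤ (n:ℝ) := sqrt_le_self' hn1
  set In : ℝ := ∫ s in (0:ℝ)..(n:ℝ), extCb F s with hIndef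
  set J : ℝ := ∫ s in (n:ℝ)..t, extCb F s with hJdef
  have hsplitI : (∫ s in (0:ℝ)..t, extCb F s) = In + J :=
    (intervalIntegral.integral_add_adjacent_intervals (extCb_intervalIntegrable F 0 n)
      (extCb_intervalIntegrable F n t)).symm
  have hcF : cesaroFun F t = (1/t) * (In + J) := by
    unfold cesaroFun
    rw [if_neg (ne_of_gt htpos), hsplitI]
  have habsJ : |J| ≤ B := by
    have h := intervalIntegral.norm_integral_le_of_norm_le_const (C := B)
      (f := extCb F) (a := (n:ℝ)) (b := t) ?_
    · rw [Real.norm_eq_abs] at h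
      have h2 : |t - (n:ℝ)| ≤ 1 := by rw [abs_of_nonneg (by linarith)]; linarith
      calc |J| ≤ B * |t - (n:ℝ)| := h
        _ ≤ B * 1 := mul_le_mul_of_nonneg_left h2 hB0
        _ = B := mul_one B
    · intro s hs
      rw [Set.uIoc_of_le hnt] at hs
      have hs0 : (0:ℝ) ≤ s := le_trans (by linarith) hs.1.le
      rw [Real.norm_eq_abs, hextCb s hs0]
      exact hfg_abs s hs0
  have habsIn : |In| ≤ B * n := by
    have h := intervalIntegral.norm_integral_le_of_norm_le_const (C := B)
      (f := extCb F) (a := (0:ℝ)) (b := (n:ℝ)) ?_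
    · rw [Real.norm_eq_abs] at h
      calc |In| ≤ B * |(n:ℝ) - 0| := h
        _ = B * n := by rw [sub_zero, abs_of_pos hnpos]
    · intro s hs
      rw [Set.uIoc_of_le hnpos.le] at hs
      have hs0 : (0:ℝ) ≤ s := hs.1.le
      rw [Real.norm_eq_abs, hextCb s hs0]
      exact hfg_abs s hs0
  have hT1 : |cesaroFun F t - (1/(n:ℝ)) * In| ≤ 2 * B / n := by
    have e : cesaroFun F t - (1/(n:ℝ)) * In = J / t + In * (((n:ℝ) - t)/(t * n)) := by
      rw [hcF]
      field_simp
      ring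
    rw [e]
    have hJt : |J / t| ≤ B / n := by
      rw [abs_div, abs_of_pos htpos]
      exact div_le_div₀ hB0 habsJ hnpos hnt
    have hQ : |In * (((n:ℝ) - t)/(t * n))| ≤ B / n := by
      rw [abs_mul]
      have e2 : |((n:ℝ) - t)/(t * n)| = (t - n)/(t * n) := by
        rw [abs_div, abs_of_pos (by positivity : (0:ℝ) < t * n), abs_sub_comm,
          abs_of_nonneg (by linarith : (0:ℝ) ≤ t - n)]
      rw [e2]
      calc |In| * ((t - n)/(t*n)) ≤ (B * n) * ((t - n)/(t*n)) :=
            mul_le_mul_of_nonneg_right habsIn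
              (div_nonneg (by linarith) (by positivity))
        _ ≤ (B * n) * (1/(t*n)) := by
            apply mul_le_mul_of_nonneg_left _ (by positivity)
            apply div_le_div₀ zero_le_one (by linarith) (by positivity) le_rfl
        _ = B / t := by field_simp
        _ ≤ B / n := div_le_div₀ hB0 le_rfl hnpos hnt
    calc |J/t + In * (((n:ℝ) - t)/(t * n))|
        ≤ |J/t| + |In * (((n:ℝ) - t)/(t * n))| := abs_add_le _ _
      _ ≤ B/n + B/n := add_le_add hJt hQ
      _ = 2*B/n := by ring
  set S : ℕ → ℝ := fun m => ∑ k ∈ Finset.range m, fg k with hSdef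
  have hT2 : |(1/(n:ℝ)) * In - (1/(n:ℝ)) * S n| ≤ B/n + 6*B/Real.sqrt n := by
    have h := sumA n
    have e : (1/(n:ℝ)) * In - (1/(n:ℝ)) * S n = (In - S n)/n := by
      field_simp
    rw [e, abs_div, abs_of_pos hnpos]
    have e3 : Real.sqrt n / (n:ℝ) = 1 / Real.sqrt n := by
      rw [eq_div_iff hsq.ne', div_mul_eq_mul_div, Real.mul_self_sqrt hnpos.le,
        div_self hnpos.ne']
    calc |In - S n| / (n:ℝ) ≤ (B + 6*B*Real.sqrt n)/n :=
          div_le_div₀ (by nlinarith [mul_nonneg hB0 (Real.sqrt_nonneg (n:ℝ))]) h hnpos le_rfl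
      _ = B/n + 6*B*(Real.sqrt n / n) := by ring
      _ = B/n + 6*B/Real.sqrt n := by rw [e3]; ring
  have hSnn : ∀ m : ℕ, 0 ≤ S m := by
    intro m
    apply Finset.sum_nonneg
    intro k _
    exact hfg_nonneg k (Nat.cast_nonneg k)
  have hSle : ∀ m : ℕ, S m ≤ m * B := by
    intro m
    calc S m ≤ ∑ _k ∈ Finset.range m, B :=
          Finset.sum_le_sum fun k _ => hfg_leB k (Nat.cast_nonneg k)
      _ = m * B := by rw [Finset.sum_const, Finset.card_range, nsmul_eq_mul]
  have hAn : ∀ m : ℕ, (cesaroLp x) m = (1/((m:ℝ)+1)) * S (m+1) := by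
    intro m
    have e : (cesaroLp x) m = (1/((m:ℝ)+1)) * ∑ k ∈ Finset.range (m+1), x k := rfl
    rw [e]
    congr 1
    exact Finset.sum_congr rfl fun k _ => by rw [hx k]
  have hT3 : |(1/(n:ℝ)) * S n - (cesaroLp x) n| ≤ 2*B/n := by
    rw [hAn n]
    have eS : S (n+1) = S n + fg n := Finset.sum_range_succ _ n
    have e : (1/(n:ℝ)) * S n - (1/((n:ℝ)+1)) * S (n+1)
        = S n / ((n:ℝ) * ((n:ℝ)+1)) - fg n / ((n:ℝ)+1) := by
      rw [eS]
      field_simp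
      ring
    rw [e]
    have h1 : 0 ≤ S n / ((n:ℝ)*((n:ℝ)+1)) := div_nonneg (hSnn n) (by positivity)
    have h2 : S n / ((n:ℝ)*((n:ℝ)+1)) ≤ B/n := by
      calc S n / ((n:ℝ)*((n:ℝ)+1)) ≤ ((n:ℝ)*B)/((n:ℝ)*((n:ℝ)+1)) :=
            div_le_div₀ (by positivity) (hSle n) (by positivity) le_rfl
        _ = B/((n:ℝ)+1) := by rw [mul_div_mul_left _ _ hnpos.ne']
        _ ≤ B/n := div_le_div₀ hB0 le_rfl hnpos (by linarith)
    have h3 : 0 ≤ fg n / ((n:ℝ)+1) :=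
      div_nonneg (hfg_nonneg n (Nat.cast_nonneg n)) (by linarith)
    have h4 : fg n / ((n:ℝ)+1) ≤ B/n :=
      div_le_div₀ hB0 (hfg_leB n (Nat.cast_nonneg n)) hnpos (by linarith)
    have h5 : (0:ℝ) ≤ B/n := by positivity
    have h6 : 2*B/(n:ℝ) = B/n + B/n := by ring
    rw [abs_le]
    constructor <;> linarith
  have hclp : ∀ m : ℕ, ‖(⇑(cesaroLp x)) m‖ ≤ ‖cesaroLp x‖ :=
    fun m => lp.norm_apply_le_norm ENNReal.top_ne_zero (cesaroLp x) m
  have heval := extFun_eval (⇑(cesaroLp x)) hclp n hnt htn1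
  have hT4 : |extFun (⇑(cesaroLp x)) t - (cesaroLp x) n| ≤ 2*B/n := by
    rw [heval]
    have e : (cesaroLp x) n + (t - n) * ((cesaroLp x) (n+1) - (cesaroLp x) n) - (cesaroLp x) n
        = (t - n) * ((cesaroLp x) (n+1) - (cesaroLp x) n) := by ring
    rw [e, abs_mul]
    have h1 : |t - (n:ℝ)| ≤ 1 := by rw [abs_of_nonneg (by linarith)]; linarith
    have hdiff : |(cesaroLp x) (n+1) - (cesaroLp x) n| ≤ 2*B/n := by
      rw [hAn (n+1), hAn n]
      push_cast
      have eS : S (n+1+1) = S (n+1) + fg ((n:ℝ)+1) := by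
        simp only [hSdef]
        rw [Finset.sum_range_succ]
        push_cast
        ring
      have e2 : (1/((n:ℝ)+1+1)) * S (n+1+1) - (1/((n:ℝ)+1)) * S (n+1)
          = fg ((n:ℝ)+1) / ((n:ℝ)+2) - S (n+1) / (((n:ℝ)+1)*((n:ℝ)+2)) := by
        rw [eS]
        field_simp
        ring
      rw [e2]
      have h1' : 0 ≤ fg ((n:ℝ)+1) / ((n:ℝ)+2) :=
        div_nonneg (hfg_nonneg _ (by linarith)) (by linarith)
      have h2' : fg ((n:ℝ)+1) / ((n:ℝ)+2) ≤ B/n :=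
        div_le_div₀ hB0 (hfg_leB _ (by linarith)) hnpos (by linarith)
      have h3' : 0 ≤ S (n+1) / (((n:ℝ)+1)*((n:ℝ)+2)) :=
        div_nonneg (hSnn (n+1)) (by positivity)
      have h4' : S (n+1) / (((n:ℝ)+1)*((n:ℝ)+2)) ≤ B/n := by
        calc S (n+1) / (((n:ℝ)+1)*((n:ℝ)+2))
            ≤ (((n:ℝ)+1)*B) / (((n:ℝ)+1)*((n:ℝ)+2)) := by
              apply div_le_div₀ (by positivity) _ (by positivity) le_rfl
              have := hSle (n+1)
              push_cast at this
              linarith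
          _ = B/((n:ℝ)+2) := by rw [mul_div_mul_left _ _ (by linarith : (n:ℝ)+1 ≠ 0)]
          _ ≤ B/n := div_le_div₀ hB0 le_rfl hnpos (by linarith)
      have h5' : (0:ℝ) ≤ B/n := by positivity
      have h6' : 2*B/(n:ℝ) = B/n + B/n := by ring
      rw [abs_le]
      constructor <;> linarith
    calc |t - (n:ℝ)| * |(cesaroLp x) (n+1) - (cesaroLp x) n|
        ≤ 1 * (2*B/n) := mul_le_mul h1 hdiff (abs_nonneg _) zero_le_one
      _ = 2*B/n := one_mul _
  have decomp : cesaroFun F t - extFun (⇑(cesaroLp x)) t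
      = (cesaroFun F t - (1/(n:ℝ))*In) + ((1/(n:ℝ))*In - (1/(n:ℝ))*S n)
        + ((1/(n:ℝ))*S n - (cesaroLp x) n)
        - (extFun (⇑(cesaroLp x)) t - (cesaroLp x) n) := by ring
  have total : |cesaroFun F t - extFun (⇑(cesaroLp x)) t| ≤ 7*B/n + 6*B/Real.sqrt n := by
    rw [decomp]
    have habs := abs_sub (G := ℝ)
    calc |(cesaroFun F t - (1/(n:ℝ))*In) + ((1/(n:ℝ))*In - (1/(n:ℝ))*S n)
        + ((1/(n:ℝ))*S n - (cesaroLp x) n) - (extFun (⇑(cesaroLp x)) t - (cesaroLp x) n)|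
        ≤ |(cesaroFun F t - (1/(n:ℝ))*In) + ((1/(n:ℝ))*In - (1/(n:ℝ))*S n)
            + ((1/(n:ℝ))*S n - (cesaroLp x) n)| + |extFun (⇑(cesaroLp x)) t - (cesaroLp x) n| :=
          abs_sub _ _
      _ ≤ (|(cesaroFun F t - (1/(n:ℝ))*In) + ((1/(n:ℝ))*In - (1/(n:ℝ))*S n)|
            + |(1/(n:ℝ))*S n - (cesaroLp x) n|) + |extFun (⇑(cesaroLp x)) t - (cesaroLp x) n| := by
          gcongr
          exact abs_add_le _ _
      _ ≤ ((|cesaroFun F t - (1/(n:ℝ))*In| + |(1/(n:ℝ))*In - (1/(n:ℝ))*S n|)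
            + |(1/(n:ℝ))*S n - (cesaroLp x) n|) + |extFun (⇑(cesaroLp x)) t - (cesaroLp x) n| := by
          gcongr
          exact abs_add_le _ _
      _ ≤ ((2*B/n + (B/n + 6*B/Real.sqrt n)) + 2*B/n) + 2*B/n := by
          gcongr
      _ = 7*B/n + 6*B/Real.sqrt n := by ring
  have hfin : 7*B/(n:ℝ) ≤ 7*B/Real.sqrt n := div_le_div₀ (by positivity) le_rfl hsq hsqn
  calc |cesaroFun F t - extFun (⇑(cesaroLp x)) t| ≤ 7*B/n + 6*B/Real.sqrt n := total
    _ ≤ 7*B/Real.sqrt n + 6*B/Real.sqrt n := add_le_add hfin le_rfl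
    _ = 13*B/Real.sqrt n := by ring

end MainEstimate
section Assembly

noncomputable def cesaroCbL : Cb →ₗ[ℝ] Cb where
  toFun := cesaroCb
  map_add' f g := by
    ext t
    simp only [BoundedContinuousFunction.add_apply, cesaroCb_apply]
    unfold cesaroFun
    by_cases ht : t.1 = 0
    · rw [if_pos ht, if_pos ht, if_pos ht]
      rfl
    · rw [if_neg ht, if_neg ht, if_neg ht]
      have he : ∀ s : ℝ, extCb (f + g) s = extCb f s + extCb g s := fun s => rfl
      rw [intervalIntegral.integral_congr (g := fun s => extCb f s + extCb g s)
          (fun s _ => he s),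
        intervalIntegral.integral_add (extCb_intervalIntegrable f 0 t.1)
          (extCb_intervalIntegrable g 0 t.1)]
      ring
  map_smul' c f := by
    ext t
    simp only [BoundedContinuousFunction.coe_smul, RingHom.id_apply, Pi.smul_apply,
      cesaroCb_apply, smul_eq_mul]
    unfold cesaroFun
    by_cases ht : t.1 = 0
    · rw [if_pos ht, if_pos ht]
      rfl
    · rw [if_neg ht, if_neg ht]
      have he : ∀ s : ℝ, extCb (c • f) s = c * extCb f s := fun s => rfl
      rw [intervalIntegral.integral_congr (g := fun s => c * extCb f s) (fun s _ => he s),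
        intervalIntegral.integral_const_mul]
      ring

lemma cesaroCbL_apply (f : Cb) : cesaroCbL f = cesaroCb f := rfl

noncomputable def cesaroLpL : lp (fun _ : ℕ => ℝ) ∞ →ₗ[ℝ] lp (fun _ : ℕ => ℝ) ∞ where
  toFun := cesaroLp
  map_add' a b := by
    apply lp.ext
    funext n
    rw [lp.coeFn_add (cesaroLp a) (cesaroLp b), Pi.add_apply]
    show (1 / ((n : ℝ) + 1)) * ∑ k ∈ Finset.range (n + 1), (a + b) k
      = (1 / ((n : ℝ) + 1)) * ∑ k ∈ Finset.range (n + 1), a k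
        + (1 / ((n : ℝ) + 1)) * ∑ k ∈ Finset.range (n + 1), b k
    have hco : ∀ k : ℕ, (a + b) k = a k + b k := fun k => by
      rw [lp.coeFn_add]; rfl
    rw [Finset.sum_congr rfl fun k _ => hco k, Finset.sum_add_distrib]
    ring
  map_smul' c a := by
    apply lp.ext
    funext n
    rw [RingHom.id_apply, lp.coeFn_smul (c := c) (f := cesaroLp a), Pi.smul_apply, smul_eq_mul]
    show (1 / ((n : ℝ) + 1)) * ∑ k ∈ Finset.range (n + 1), (c • a) k
      = c * ((1 / ((n : ℝ) + 1)) * ∑ k ∈ Finset.range (n + 1), a k)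
    have hco : ∀ k : ℕ, (c • a) k = c * a k := fun k => by
      rw [lp.coeFn_smul]; rfl
    rw [Finset.sum_congr rfl fun k _ => hco k, ← Finset.mul_sum]
    ring

lemma cesaroLpL_apply (a : lp (fun _ : ℕ => ℝ) ∞) : cesaroLpL a = cesaroLp a := rfl

lemma lp_norm_bound (v : lp (fun _ : ℕ => ℝ) ∞) : ∀ n : ℕ, ‖v n‖ ≤ ‖v‖ :=
  fun n => lp.norm_apply_le_norm ENNReal.top_ne_zero v n

noncomputable def extL : lp (fun _ : ℕ => ℝ) ∞ →ₗ[ℝ] Cb where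
  toFun := extLCb
  map_add' v w := by
    ext t
    simp only [BoundedContinuousFunction.add_apply, extLCb_apply]
    unfold extFun
    have hδ : ∀ s : ℝ, deltaFun (⇑(v + w)) s = deltaFun (⇑v) s + deltaFun (⇑w) s := by
      intro s
      unfold deltaFun
      rw [lp.coeFn_add]
      simp only [Pi.add_apply]
      ring
    rw [intervalIntegral.integral_congr
        (g := fun s => deltaFun (⇑v) s + deltaFun (⇑w) s) (fun s _ => hδ s),
      intervalIntegral.integral_add
        (deltaFun_intervalIntegrable (⇑v) (lp_norm_bound v) 0 t.1)
        (deltaFun_intervalIntegrable (⇑w) (lp_norm_bound w) 0 t.1)]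
    have h0 : (⇑(v + w)) 0 = v 0 + w 0 := by rw [lp.coeFn_add]; rfl
    rw [h0]
    ring
  map_smul' c v := by
    ext t
    simp only [BoundedContinuousFunction.coe_smul, RingHom.id_apply, Pi.smul_apply,
      extLCb_apply, smul_eq_mul]
    unfold extFun
    have hδ : ∀ s : ℝ, deltaFun (⇑(c • v)) s = c * deltaFun (⇑v) s := by
      intro s
      unfold deltaFun
      rw [lp.coeFn_smul]
      simp only [Pi.smul_apply, smul_eq_mul]
      ring
    rw [intervalIntegral.integral_congr
        (g := fun s => c * deltaFun (⇑v) s) (fun s _ => hδ s),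
      intervalIntegral.integral_const_mul]
    have h0 : (⇑(c • v)) 0 = c * v 0 := by rw [lp.coeFn_smul]; rfl
    rw [h0]
    ring

lemma extL_apply (v : lp (fun _ : ℕ => ℝ) ∞) : extL v = extLCb v := rfl

lemma isSingularState_comp_extL {γ : Cb →ₗ[ℝ] ℝ} (hγ : IsSingularStateCb γ) :
    IsSingularStateLp (γ.comp extL) := by
  obtain ⟨hpos, hone, hsing⟩ := hγ
  refine ⟨?_, ?_, ?_⟩
  · intro v hv
    apply hpos
    intro t
    show 0 ≤ extFun (⇑v) t.1
    exact extFun_nonneg (⇑v) (lp_norm_bound v) hv t.2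
  · show γ (extLCb 1) = 1
    have h1 : extLCb (1 : lp (fun _ : ℕ => ℝ) ∞) = 1 := by
      ext t
      rw [extLCb_apply, extFun_eval_floor (⇑(1 : lp (fun _ : ℕ => ℝ) ∞))
        (lp_norm_bound 1) t.2]
      simp only [lp_one_apply, BoundedContinuousFunction.coe_one, Pi.one_apply]
      ring
    rw [h1, hone]
  · intro v hv
    show γ (extLCb v) = 0
    obtain ⟨N, hN⟩ : ∃ N : ℕ, ∀ k : ℕ, N ≤ k → v k = 0 := by
      obtain ⟨N, hNb⟩ := hv.bddAbove
      refine ⟨N + 1, fun k hk => ?_⟩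
      by_contra h0
      have hmem : k ∈ {n : ℕ | v n ≠ 0} := h0
      have := hNb hmem
      omega
    apply hsing
    refine ⟨(N : ℝ), fun t ht => ?_⟩
    rw [extLCb_apply, extFun_eval_floor (⇑v) (lp_norm_bound v) t.2]
    have h1 : N ≤ ⌊t.1⌋₊ := Nat.le_floor ht
    rw [hN _ h1, hN _ (by omega)]
    ring

lemma isSingularState_comp_sampleL {σ : lp (fun _ : ℕ => ℝ) ∞ →ₗ[ℝ] ℝ}
    (hσ : IsSingularStateLp σ) : IsSingularStateCb (σ.comp sampleL) := by
  obtain ⟨hpos, hone, hsing⟩ := hσ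
  refine ⟨?_, ?_, ?_⟩
  · intro f hf
    apply hpos
    intro n
    show 0 ≤ f ⟨(n : ℝ), Set.mem_Ici.2 (Nat.cast_nonneg n)⟩
    exact hf _
  · show σ (sampleSeq 1) = 1
    have h1 : sampleSeq (1 : Cb) = 1 := by
      apply lp.ext
      funext n
      rw [sampleSeq_apply, lp.infty_coeFn_one]
      simp
    rw [h1, hone]
  · rintro f ⟨M, hM⟩
    show σ (sampleSeq f) = 0
    apply hsing
    apply Set.Finite.subset (Set.finite_Iio ⌈M⌉₊)
    intro n hn
    simp only [Set.mem_setOf_eq] at hn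
    rw [Set.mem_Iio, Nat.lt_ceil]
    by_contra h
    push_neg at h
    exact hn (by rw [sampleSeq_apply]; exact hM _ h)

end Assembly
section Final

lemma choose_threshold {B ε : ℝ} (hB0 : 0 ≤ B) (hε : 0 < ε) :
    ∃ n₀ : ℕ, 1 ≤ n₀ ∧ ∀ n : ℕ, n₀ ≤ n → 13 * B / Real.sqrt n ≤ ε := by
  obtain ⟨m, hm⟩ := exists_nat_gt ((13 * B / ε) ^ 2)
  refine ⟨max m 1, le_max_right m 1, fun n hn => ?_⟩
  have hn1 : 1 ≤ n := le_trans (le_max_right m 1) hn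
  have hnm : m ≤ n := le_trans (le_max_left m 1) hn
  have hnpos : (0:ℝ) < (n:ℝ) := by
    have : (1:ℕ) ≤ n := hn1
    exact_mod_cast Nat.lt_of_lt_of_le Nat.zero_lt_one this
  have hsq : 0 < Real.sqrt n := Real.sqrt_pos.2 hnpos
  rw [div_le_iff₀ hsq]
  have h1 : (13 * B / ε) ^ 2 ≤ (n:ℝ) := by
    have : ((m:ℝ)) ≤ (n:ℝ) := by exact_mod_cast hnm
    linarith
  have h2 : 13 * B / ε ≤ Real.sqrt n := by
    rw [show (n:ℝ) = Real.sqrt n * Real.sqrt n from (Real.mul_self_sqrt hnpos.le).symm] at h1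
    nlinarith [Real.sqrt_nonneg (n:ℝ), div_nonneg (by linarith : (0:ℝ) ≤ 13 * B) hε.le]
  calc 13 * B = (13 * B / ε) * ε := by field_simp
    _ ≤ Real.sqrt n * ε := mul_le_mul_of_nonneg_right h2 hε.le
    _ = ε * Real.sqrt n := mul_comm _ _

/-- For every Cesàro–Banach limit `ξ` on `C_b([0,∞))` there exists a
Cesàro–Banach limit `ξ'` on `ℓ∞`, and conversely, such that `ξ(f_g) = ξ'((f_g(k))_k)`
for every admissible `g`. -/
theorem statement17 :
    (∀ ξ : Cb →ₗ[ℝ] ℝ, IsCesaroBanachLimitCb ξ →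
      ∃ ξ' : lp (fun _ : ℕ => ℝ) ∞ →ₗ[ℝ] ℝ, IsCesaroBanachLimitLp ξ' ∧
        TransfersTo ξ ξ') ∧
    (∀ ξ' : lp (fun _ : ℕ => ℝ) ∞ →ₗ[ℝ] ℝ, IsCesaroBanachLimitLp ξ' →
      ∃ ξ : Cb →ₗ[ℝ] ℝ, IsCesaroBanachLimitCb ξ ∧
        TransfersTo ξ ξ') := by
  constructor
  · -- direction 1 : from Cb to lp
    intro ξ hξ
    obtain ⟨γ, hγ, hγC⟩ := hξ
    refine ⟨(γ.comp extL).comp cesaroLpL,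
      ⟨γ.comp extL, isSingularState_comp_extL hγ, fun a => rfl⟩, ?_⟩
    intro g hg0 _hmono hint hBex fg hfg F hF x hx
    obtain ⟨B, hB⟩ := hBex
    have hB' : ∀ t : ℝ, 1 ≤ t → (1 / Real.log (1 + t)) * ∫ s in (1:ℝ)..t, g s ≤ B := by
      intro t ht; exact hB t ht
    have hB0 : 0 ≤ B := by
      have h := hB' 1 le_rfl
      simpa using h
    have hest := main_estimate g hg0 hint B hB' fg hfg F hF x hx
    have hξF : ξ F = γ (cesaroCb F) := hγC F (cesaroCb F) (isCesaroOfCb_cesaroCb F)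
    have hξ'x : ((γ.comp extL).comp cesaroLpL) x = γ (extLCb (cesaroLp x)) := rfl
    rw [hξF, hξ'x]
    have hvan : γ (cesaroCb F - extLCb (cesaroLp x)) = 0 := by
      apply singular_vanish_cb hγ
      intro ε hε
      obtain ⟨n₀, hn₀1, hn₀⟩ := choose_threshold hB0 hε
      refine ⟨(n₀ : ℝ), fun t ht => ?_⟩
      have ht0 : (0:ℝ) ≤ t.1 := t.2
      set n : ℕ := ⌊t.1⌋₊ with hndef
      have hn1 : n₀ ≤ n := Nat.le_floor ht
      have hnn1 : 1 ≤ n := le_trans hn₀1 hn1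
      have h1 : (n:ℝ) ≤ t.1 := Nat.floor_le ht0
      have h2 : t.1 ≤ (n:ℝ) + 1 := (Nat.lt_floor_add_one t.1).le
      have hb := hest n hnn1 t.1 h1 h2
      have heq : (cesaroCb F - extLCb (cesaroLp x)) t
          = cesaroFun F t.1 - extFun (⇑(cesaroLp x)) t.1 := rfl
      rw [heq]
      exact le_trans hb (hn₀ n hn1)
    have := map_sub γ (cesaroCb F) (extLCb (cesaroLp x))
    rw [hvan] at this
    linarith [this.symm]
  · -- direction 2 : from lp to Cb
    intro ξ' hξ'
    obtain ⟨σ, hσ, hσC⟩ := hξ'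
    refine ⟨(σ.comp sampleL).comp cesaroCbL,
      ⟨σ.comp sampleL, isSingularState_comp_sampleL hσ, ?_⟩, ?_⟩
    · intro f F hCF
      show σ (sampleSeq (cesaroCb f)) = σ (sampleSeq F)
      rw [hCF.eq_cesaroCb]
    · intro g hg0 _hmono hint hBex fg hfg F hF x hx
      obtain ⟨B, hB⟩ := hBex
      have hB' : ∀ t : ℝ, 1 ≤ t → (1 / Real.log (1 + t)) * ∫ s in (1:ℝ)..t, g s ≤ B := by
        intro t ht; exact hB t ht
      have hB0 : 0 ≤ B := by
        have h := hB' 1 le_rfl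
        simpa using h
      have hest := main_estimate g hg0 hint B hB' fg hfg F hF x hx
      rw [hσC x]
      show σ (sampleSeq (cesaroCb F)) = σ (cesaroLp x)
      have hvan : σ (sampleSeq (cesaroCb F) - cesaroLp x) = 0 := by
        apply singular_vanish_lp hσ
        intro ε hε
        obtain ⟨n₀, hn₀1, hn₀⟩ := choose_threshold hB0 hε
        refine ⟨n₀, fun n hn => ?_⟩
        have hnn1 : 1 ≤ n := le_trans hn₀1 hn
        have h1 : ((n:ℝ)) ≤ (n:ℝ) := le_rfl
        have h2 : ((n:ℝ)) ≤ (n:ℝ) + 1 := by linarith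
        have hb := hest n hnn1 (n:ℝ) h1 h2
        have heq : (sampleSeq (cesaroCb F) - cesaroLp x) n
            = cesaroFun F (n:ℝ) - (cesaroLp x) n := by
          rw [lp.coeFn_sub, Pi.sub_apply]
          rfl
        rw [heq]
        have heval : extFun (⇑(cesaroLp x)) ((n:ℝ)) = (cesaroLp x) n :=
          extFun_eval_nat (⇑(cesaroLp x)) (lp_norm_bound (cesaroLp x)) n
        rw [← heval]
        exact le_trans hb (hn₀ n hn)
      have := map_sub σ (sampleSeq (cesaroCb F)) (cesaroLp x)
      rw [hvan] at this
      linarith [this.symm]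

end Final
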